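/- arXiv:1304.7377 — 3 statements merged into one kernel-verified Lean document; each statement's English description precedes it below -/
import Mathlib

section
/- Subject to the diagonal-shear boundary condition BC1, if L>1 then J_L=0; in fact there exists an admissible pair (u,β) satisfying BC1 with E_L(u,β)=0. -/
open MeasureTheory Set Filter Topology
open scoped ENNReal NNReal

noncomputable section

abbrev Pt2 := Fin 2 → ℝ
abbrev Mat2 := Matrix (Fin 2) (Fin 2) ℝ

/-- The rectangle Ω_L = (0,1) × (0,L). -/
def Omega (L : ℝ) : Set Pt2 := {x | x 0 ∈ Ioo (0:ℝ) 1 ∧ x 1 ∈ Ioo (0:ℝ) L}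

/-- Partial derivative ∂_j of a scalar function. -/
def pd (j : Fin 2) (f : Pt2 → ℝ) (x : Pt2) : ℝ := fderiv ℝ f x (Pi.single j 1)

/-- C¹ test function compactly supported in Ω_L. -/
def IsTest (L : ℝ) (f : Pt2 → ℝ) : Prop :=
  ContDiff ℝ 1 f ∧ HasCompactSupport f ∧ tsupport f ⊆ Omega L

/-- Du is the weak (distributional) gradient of u on Ω_L. -/
def IsWeakGradient (L : ℝ) (u : Pt2 → Pt2) (Du : Pt2 → Mat2) : Prop :=
  ∀ f : Pt2 → ℝ, IsTest L f → ∀ i j,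
    ∫ x in Omega L, u x i * pd j f x = - ∫ x in Omega L, Du x i j * f x

/-- Symmetric part of a matrix. -/
def symPart (M : Mat2) : Mat2 := (2:ℝ)⁻¹ • (M + M.transpose)

/-- Squared Frobenius norm. -/
def normSq (M : Mat2) : ℝ := ∑ i, ∑ j, (M i j)^2

/-- The two slip matrices (up to scalar multiples). -/
def SlipSet : Set Mat2 :=
  {M | ∃ s : ℝ, M = s • !![(1:ℝ), -1; 1, -1] ∨ M = s • !![(1:ℝ), 1; -1, -1]}

/-- The single-slip side condition. -/
def SingleSlip (L : ℝ) (β : Pt2 → Mat2) : Prop :=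
  ∀ᵐ x ∂(volume.restrict (Omega L)), β x ∈ SlipSet

/-- Total variation of the row-wise distributional curl of β on Ω_L. -/
def TVcurl (L : ℝ) (β : Pt2 → Mat2) : ℝ≥0∞ :=
  sSup {t | ∃ φ : Fin 2 → Pt2 → ℝ,
    (∀ i, IsTest L (φ i)) ∧ (∀ i x, φ i x ∈ Icc (-1:ℝ) 1) ∧
    t = ENNReal.ofReal (∑ i, ∫ x in Omega L,
          (β x i 1 * pd 0 (φ i) x - β x i 0 * pd 1 (φ i) x))}

/-- The energy E_L(u,β) (expressed through the weak gradient Du of u). -/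
def Energy (L σ : ℝ) (Du β : Pt2 → Mat2) : ℝ≥0∞ :=
  (∫⁻ x in Omega L, ENNReal.ofReal (normSq (symPart (Du x - β x)))) +
    ENNReal.ofReal σ * TVcurl L β

/-- Admissible pair (u,β), with Du the weak gradient of u. -/
def IsAdmissible (L : ℝ) (u : Pt2 → Pt2) (Du β : Pt2 → Mat2) : Prop :=
  ContinuousOn u (closure (Omega L)) ∧
  IsWeakGradient L u Du ∧
  (∀ i j, MemLp (fun x => Du x i j) 2 (volume.restrict (Omega L))) ∧
  (∀ i j, LocallyIntegrableOn (fun x => β x i j) (Omega L)) ∧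
  SingleSlip L β

/-- Dirichlet boundary conditions: u = 0 at x₂ = 0 and u = γ v at x₂ = L. -/
def BCv (L γ : ℝ) (v : Fin 2 → ℝ) (u : Pt2 → Pt2) : Prop :=
  (∀ x ∈ closure (Omega L), x 1 = 0 → u x = 0) ∧
  (∀ x ∈ closure (Omega L), x 1 = L → u x = γ • v)

/-- The infimum energy J_L. -/
def J (L σ γ : ℝ) (v : Fin 2 → ℝ) : ℝ≥0∞ :=
  sInf {e | ∃ u Du β, IsAdmissible L u Du β ∧ BCv L γ v u ∧ TVcurl L β ≠ ⊤ ∧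
    e = Energy L σ Du β}

/-! Take `u(x) = g(x₁ - x₂) (1, 1)` with `g` smooth, `g = 0` on `[0, ∞)` and `g = γ` on
`(-∞, 1 - L]`, which exists because `L > 1` makes these two ranges disjoint. On the bottom edge
`x₁ - x₂ = x₁ ≥ 0` and on the top edge `x₁ - x₂ = x₁ - L ≤ 1 - L`, so `u` satisfies BC1. Its gradient
`g'(x₁ - x₂) [[1, -1], [1, -1]]` is everywhere a slip matrix, so `β := ∇u` is admissible and leaves
no elastic energy, while the curl of a gradient vanishes, leaving no dislocation energy either. -/

lemma isOpen_omega (L : ℝ) : IsOpen (Omega L) :=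
  (isOpen_Ioo.preimage (continuous_apply 0)).inter (isOpen_Ioo.preimage (continuous_apply 1))

lemma closure_omega_subset (L : ℝ) :
    closure (Omega L) ⊆ {x : Pt2 | x 0 ∈ Icc (0:ℝ) 1 ∧ x 1 ∈ Icc (0:ℝ) L} :=
  closure_minimal (fun _ hx => ⟨Ioo_subset_Icc_self hx.1, Ioo_subset_Icc_self hx.2⟩)
    ((isClosed_Icc.preimage (continuous_apply 0)).inter
      (isClosed_Icc.preimage (continuous_apply 1)))

lemma omega_subset_Icc (L : ℝ) : Omega L ⊆ Icc 0 (fun _ => max 1 L) := by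
  intro x hx
  refine ⟨fun k => ?_, fun k => ?_⟩ <;> fin_cases k
  exacts [hx.1.1.le, hx.2.1.le, hx.1.2.le.trans (le_max_left _ _),
    hx.2.2.le.trans (le_max_right _ _)]

instance isFiniteMeasure_restrict_omega (L : ℝ) : IsFiniteMeasure (volume.restrict (Omega L)) :=
  isFiniteMeasure_restrict.2
    ((measure_mono (omega_subset_Icc L)).trans_lt isCompact_Icc.measure_lt_top).ne

lemma Continuous.memLp_restrict_omega {f : Pt2 → ℝ} (hf : Continuous f) (p : ℝ≥0∞) (L : ℝ) :
    MemLp f p (volume.restrict (Omega L)) := by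
  obtain ⟨C, hC⟩ := isCompact_Icc.exists_bound_of_continuousOn hf.continuousOn
  refine MemLp.of_bound hf.aestronglyMeasurable C ?_
  exact (ae_restrict_iff' (isOpen_omega L).measurableSet).2
    (ae_of_all _ fun x hx => hC x (omega_subset_Icc L hx))

lemma Continuous.integrableOn_omega {f : Pt2 → ℝ} (hf : Continuous f) (L : ℝ) :
    IntegrableOn f (Omega L) :=
  memLp_one_iff_integrable.1 (hf.memLp_restrict_omega 1 L)

lemma ContDiff.contDiff_pd {m n : WithTop ℕ∞} {f : Pt2 → ℝ} (hf : ContDiff ℝ n f) (j : Fin 2)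
    (hmn : m + 1 ≤ n) : ContDiff ℝ m (pd j f) :=
  (hf.fderiv_right hmn).clm_apply contDiff_const

lemma ContDiff.continuous_pd {f : Pt2 → ℝ} (hf : ContDiff ℝ 1 f) (j : Fin 2) :
    Continuous (pd j f) :=
  (hf.contDiff_pd j (m := 0) le_rfl).continuous

lemma pd_eq_zero_of_notMem_tsupport {f : Pt2 → ℝ} {x : Pt2} (hx : x ∉ tsupport f) (j : Fin 2) :
    pd j f x = 0 := by
  rw [pd, fderiv_of_notMem_tsupport ℝ hx]; rfl

lemma pd_pd_comm {f : Pt2 → ℝ} (hf : ContDiff ℝ 2 f) (j k : Fin 2) (x : Pt2) :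
    pd j (pd k f) x = pd k (pd j f) x := by
  have hdf : Differentiable ℝ (fderiv ℝ f) :=
    (hf.fderiv_right (m := 1) le_rfl).differentiable one_ne_zero
  have hsnd (a b : Fin 2) :
      pd a (pd b f) x = fderiv ℝ (fderiv ℝ f) x (Pi.single a 1) (Pi.single b 1) := by
    change fderiv ℝ (fun y => fderiv ℝ f y (Pi.single b 1)) x (Pi.single a 1) = _
    rw [fderiv_clm_apply (hdf x) (differentiableAt_const _)]
    simp
  rw [hsnd, hsnd, hf.contDiffAt.isSymmSndFDerivAt (by simp)]

lemma integral_mul_pd_eq_neg {L : ℝ} {p f : Pt2 → ℝ} (hp : ContDiff ℝ 1 p) (hf : IsTest L f)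
    (j : Fin 2) :
    ∫ x in Omega L, p x * pd j f x = -∫ x in Omega L, pd j p x * f x := by
  obtain ⟨hf_diff, hf_supp, hf_sub⟩ := hf
  have hout : ∀ x ∉ Omega L, x ∉ tsupport f := fun x hx h => hx (hf_sub h)
  rw [setIntegral_eq_integral_of_forall_compl_eq_zero fun x hx => by
      rw [pd_eq_zero_of_notMem_tsupport (hout x hx), mul_zero],
    setIntegral_eq_integral_of_forall_compl_eq_zero fun x hx => by
      rw [image_eq_zero_of_notMem_tsupport (hout x hx), mul_zero]]
  exact integral_mul_fderiv_eq_neg_fderiv_mul_of_integrable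
    (((hp.continuous_pd j).mul hf_diff.continuous).integrable_of_hasCompactSupport
      hf_supp.mul_left)
    ((hp.continuous.mul (hf_diff.continuous_pd j)).integrable_of_hasCompactSupport
      (hf_supp.fderiv_apply (𝕜 := ℝ) _).mul_left)
    ((hp.continuous.mul hf_diff.continuous).integrable_of_hasCompactSupport hf_supp.mul_left)
    (fun x _ => hp.differentiable one_ne_zero x) (fun x _ => hf_diff.differentiable one_ne_zero x)

def jac (u : Pt2 → Pt2) (x : Pt2) : Mat2 := Matrix.of fun i j => pd j (fun y => u y i) x

lemma isWeakGradient_jac {u : Pt2 → Pt2} (hu : ContDiff ℝ 1 u) (L : ℝ) :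
    IsWeakGradient L u (jac u) := fun _ hf i j =>
  integral_mul_pd_eq_neg ((contDiff_apply ℝ ℝ i).comp hu) hf j

lemma TVcurl_jac_eq_zero {u : Pt2 → Pt2} (hu : ContDiff ℝ 2 u) (L : ℝ) :
    TVcurl L (jac u) = 0 := by
  refine le_antisymm (sSup_le ?_) zero_le
  rintro t ⟨φ, hφ, -, rfl⟩
  have hcurl (i : Fin 2) :
      ∫ x in Omega L, (jac u x i 1 * pd 0 (φ i) x - jac u x i 0 * pd 1 (φ i) x) = 0 := by
    have hui : ContDiff ℝ 2 fun y => u y i := (contDiff_apply ℝ ℝ i).comp hu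
    have hint (j k : Fin 2) :
        IntegrableOn (fun x => pd j (fun y => u y i) x * pd k (φ i) x) (Omega L) :=
      (((hui.of_le one_le_two).continuous_pd j).mul ((hφ i).1.continuous_pd k)).integrableOn_omega L
    simp only [jac, Matrix.of_apply]
    rw [integral_sub (hint 1 0) (hint 0 1),
      integral_mul_pd_eq_neg (hui.contDiff_pd 1 le_rfl) (hφ i),
      integral_mul_pd_eq_neg (hui.contDiff_pd 0 le_rfl) (hφ i)]
    simp only [pd_pd_comm hui 0 1, sub_self]
  simp only [hcurl, Finset.sum_const_zero, ENNReal.ofReal_zero, le_refl]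

lemma isAdmissible_jac_jac {u : Pt2 → Pt2} (hu : ContDiff ℝ 1 u) (hslip : ∀ x, jac u x ∈ SlipSet)
    (L : ℝ) : IsAdmissible L u (jac u) (jac u) := by
  have hjac (i j : Fin 2) : Continuous fun x => jac u x i j :=
    ((contDiff_apply ℝ ℝ i).comp hu).continuous_pd j
  exact ⟨hu.continuous.continuousOn, isWeakGradient_jac hu L,
    fun i j => (hjac i j).memLp_restrict_omega 2 L,
    fun i j => (hjac i j).locallyIntegrable.locallyIntegrableOn _, ae_of_all _ hslip⟩

lemma energy_self (L σ : ℝ) (β : Pt2 → Mat2) :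
    Energy L σ β β = ENNReal.ofReal σ * TVcurl L β := by
  simp [Energy, symPart, normSq]

lemma pd_comp_sub {g : ℝ → ℝ} (hg : Differentiable ℝ g) (j : Fin 2) (x : Pt2) :
    pd j (fun y => g (y 0 - y 1)) x =
      deriv g (x 0 - x 1) * ((Pi.single j 1 : Pt2) 0 - (Pi.single j 1 : Pt2) 1) := by
  have hsub : HasFDerivAt (fun y : Pt2 => y 0 - y 1)
      (ContinuousLinearMap.proj (R := ℝ) (0 : Fin 2) - ContinuousLinearMap.proj (1 : Fin 2)) x :=
    (hasFDerivAt_apply 0 x).fun_sub (hasFDerivAt_apply 1 x)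
  have hcomp : HasFDerivAt (fun y : Pt2 => g (y 0 - y 1)) _ x :=
    (hg _).hasDerivAt.comp_hasFDerivAt x hsub
  rw [pd, hcomp.fderiv]
  simp

def shearProfile (L γ : ℝ) (t : ℝ) : ℝ := γ * Real.smoothTransition (t / (1 - L))

lemma contDiff_shearProfile (L γ : ℝ) {n : ℕ∞} : ContDiff ℝ n (shearProfile L γ) :=
  contDiff_const.mul (Real.smoothTransition.contDiff.comp (contDiff_id.div_const _))

lemma shearProfile_of_nonneg {L : ℝ} (γ : ℝ) (hL : 1 < L) {t : ℝ} (ht : 0 ≤ t) :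
    shearProfile L γ t = 0 := by
  rw [shearProfile, Real.smoothTransition.zero_of_nonpos
    (div_nonpos_of_nonneg_of_nonpos ht (by linarith)), mul_zero]

lemma shearProfile_of_le {L : ℝ} (γ : ℝ) (hL : 1 < L) {t : ℝ} (ht : t ≤ 1 - L) :
    shearProfile L γ t = γ := by
  rw [shearProfile, Real.smoothTransition.one_of_one_le ((one_le_div_of_neg (by linarith)).2 ht),
    mul_one]

def shear (L γ : ℝ) (x : Pt2) : Pt2 := fun _ => shearProfile L γ (x 0 - x 1)

lemma contDiff_shear (L γ : ℝ) : ContDiff ℝ 2 (shear L γ) :=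
  contDiff_pi.2 fun _ => (contDiff_shearProfile L γ).comp
    ((contDiff_apply ℝ ℝ 0).sub (contDiff_apply ℝ ℝ 1))

lemma jac_shear (L γ : ℝ) (x : Pt2) :
    jac (shear L γ) x = deriv (shearProfile L γ) (x 0 - x 1) • !![(1:ℝ), -1; 1, -1] := by
  have hg := (contDiff_shearProfile L γ (n := 1)).differentiable one_ne_zero
  ext i j
  simp only [jac, shear, Matrix.of_apply, pd_comp_sub hg]
  fin_cases i <;> fin_cases j <;> simp

lemma bcv_shear {L : ℝ} (γ : ℝ) (hL : 1 < L) : BCv L γ ![1, 1] (shear L γ) := by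
  constructor
  · intro x hx hx1
    ext i
    simp [shear, hx1, shearProfile_of_nonneg γ hL (closure_omega_subset L hx).1.1]
  · intro x hx hx1
    have hdiag : x 0 - x 1 ≤ 1 - L := by linarith [(closure_omega_subset L hx).1.2]
    ext i
    fin_cases i <;> simp [shear, shearProfile_of_le γ hL hdiag]

theorem J_eq_zero_of_one_lt_BC1_general (L σ γ : ℝ) (hL : 1 < L) :
    J L σ γ ![1, 1] = 0 ∧
    ∃ u Du β, IsAdmissible L u Du β ∧ BCv L γ ![1, 1] u ∧ TVcurl L β ≠ ⊤ ∧
      Energy L σ Du β = 0 := by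
  have hadm : IsAdmissible L (shear L γ) (jac (shear L γ)) (jac (shear L γ)) :=
    isAdmissible_jac_jac ((contDiff_shear L γ).of_le one_le_two)
      (fun x => ⟨_, Or.inl (jac_shear L γ x)⟩) L
  have htv : TVcurl L (jac (shear L γ)) = 0 := TVcurl_jac_eq_zero (contDiff_shear L γ) L
  have henergy : Energy L σ (jac (shear L γ)) (jac (shear L γ)) = 0 := by
    rw [energy_self, htv, mul_zero]
  refine ⟨nonpos_iff_eq_zero.1 (sInf_le ?_), ?_⟩ <;>
    exact ⟨shear L γ, _, _, hadm, bcv_shear γ hL, htv ▸ ENNReal.zero_ne_top, by rw [henergy]⟩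

/-- Under BC1 (diagonal shear), L > 1 implies J_L = 0; in fact there is
an admissible pair satisfying BC1 with zero energy. -/
theorem J_eq_zero_of_one_lt_BC1 (L σ γ : ℝ) (hσ : 0 < σ) (hγ : 0 < γ) (hL : 1 < L) :
    J L σ γ ![1, 1] = 0 ∧
    ∃ u Du β, IsAdmissible L u Du β ∧ BCv L γ ![1, 1] u ∧ TVcurl L β ≠ ⊤ ∧
      Energy L σ Du β = 0 :=
  J_eq_zero_of_one_lt_BC1_general L σ γ hL

end
end

section
/- For α∈(0,1], the function f_α(x)=1−x^α lies in H^{1/2}(0,1); moreover the Gagliardo seminorm Q(α)=∫₀¹∫₀¹ (x^α−y^α)²/(x−y)² dx dy is finite, is nondecreasing in α on (0,1], and tends to 0 as α→0⁺, and likewise ‖f_α‖_{L²(0,1)}→0 as α→0⁺; hence ‖f_α‖_{H^{1/2}(0,1)}→0 as α→0⁺. -/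
/-!
For `0 < y ≤ x` and `t = y / x`, the bound `1 - t ^ α ≤ α log (1 / t) ≤ 4α (1 - t) t ^ (-1/4)`
gives `(x ^ α - y ^ α)² / (x - y)² ≤ 16 α² x ^ (2α - 3/2) y ^ (-1/2)`. The integrand of `Q α`
is symmetric, so `Q α` is at most twice its integral over the triangle `y ≤ x`, where this bound
integrates to `16 α`; hence `Q α ≤ 32 α`.

For monotonicity, let `0 < a ≤ b` and `γ = b / a ≥ 1`. Substituting `x = s ^ γ`, `y = t ^ γ` in
`Q a` produces the integrand of `Q b` times `γ² (s t) ^ (γ - 1) (s - t)² / (s ^ γ - t ^ γ)²`.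
This factor is at most `1`: writing `s = e ^ (m + c)`, `t = e ^ (m - c)`, this is
`γ sinh c ≤ sinh (γ c)`.

The `L²` norm tends to `0` by dominated convergence.
-/

open MeasureTheory Set Filter Topology
open scoped ENNReal NNReal

noncomputable section

/-- Gagliardo H^{1/2}(0,1) seminorm squared of f_α(x) = 1 - x^α. -/
def Q (α : ℝ) : ℝ :=
  ∫ x in Ioo (0:ℝ) 1, ∫ y in Ioo (0:ℝ) 1, (x ^ α - y ^ α) ^ 2 / (x - y) ^ 2

/-- Squared L²(0,1) norm of f_α(x) = 1 - x^α. -/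
def L2sq (α : ℝ) : ℝ := ∫ x in Ioo (0:ℝ) 1, (1 - x ^ α) ^ 2

/-- H^{1/2}(0,1) norm of f_α. -/
def Hhalf (α : ℝ) : ℝ := Real.sqrt (L2sq α + Q α)

open Real

theorem Real.mul_sinh_le_sinh_mul {γ c : ℝ} (hγ : 1 ≤ γ) (hc : 0 ≤ c) :
    γ * sinh c ≤ sinh (γ * c) := by
  have hderiv : ∀ x, HasDerivAt (fun x => sinh (γ * x) - γ * sinh x)
      (γ * (cosh (γ * x) - cosh x)) x := fun x =>
    ((((hasDerivAt_id' x).const_mul γ).sinh).sub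
      ((hasDerivAt_sinh x).const_mul γ)).congr_deriv (by ring)
  have hmono : MonotoneOn (fun x => sinh (γ * x) - γ * sinh x) (Ici 0) := by
    refine monotoneOn_of_deriv_nonneg (convex_Ici 0) (by fun_prop)
      (fun x _ => (hderiv x).differentiableAt.differentiableWithinAt) fun x hx => ?_
    rw [interior_Ici, mem_Ioi] at hx
    have hcosh : cosh x ≤ cosh (γ * x) := by
      rw [cosh_le_cosh, abs_of_pos hx, abs_of_pos (by positivity)]
      nlinarith
    rw [(hderiv x).deriv]
    nlinarith
  simpa using hmono self_mem_Ici hc hc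

theorem mul_rpow_mul_sub_le_rpow_sub_rpow {γ s t : ℝ} (hγ : 1 ≤ γ) (ht : 0 < t)
    (hts : t ≤ s) :
    γ * (s * t) ^ ((γ - 1) / 2) * (s - t) ≤ s ^ γ - t ^ γ := by
  obtain ⟨m, c, hc, rfl, rfl⟩ : ∃ m c, 0 ≤ c ∧ s = exp (m + c) ∧ t = exp (m - c) := by
    refine ⟨(log s + log t) / 2, (log s - log t) / 2, ?_, ?_, ?_⟩
    · linarith [log_le_log ht hts]
    · rw [show (log s + log t) / 2 + (log s - log t) / 2 = log s by ring,
        exp_log (ht.trans_le hts)]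
    · rw [show (log s + log t) / 2 - (log s - log t) / 2 = log t by ring, exp_log ht]
  have hlhs : γ * (exp (m + c) * exp (m - c)) ^ ((γ - 1) / 2) * (exp (m + c) - exp (m - c))
      = 2 * exp (γ * m) * (γ * sinh c) := by
    rw [← exp_add, ← exp_mul, sinh_eq,
      show (m + c + (m - c)) * ((γ - 1) / 2) = γ * m - m by ring, exp_sub, exp_add,
      sub_eq_add_neg m c, exp_add, exp_neg]
    field_simp
  have hrhs : exp (m + c) ^ γ - exp (m - c) ^ γ = 2 * exp (γ * m) * sinh (γ * c) := by
    rw [← exp_mul, ← exp_mul, sinh_eq, show (m + c) * γ = γ * m + γ * c by ring,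
      show (m - c) * γ = γ * m + -(γ * c) by ring, exp_add, exp_add]
    ring
  rw [hlhs, hrhs]
  exact mul_le_mul_of_nonneg_left (mul_sinh_le_sinh_mul hγ hc) (by positivity)

theorem sq_mul_rpow_mul_sub_sq_le {γ s t : ℝ} (hγ : 1 ≤ γ) (hs : 0 < s) (ht : 0 < t) :
    γ ^ 2 * (s * t) ^ (γ - 1) * (s - t) ^ 2 ≤ (s ^ γ - t ^ γ) ^ 2 := by
  wlog hts : t ≤ s generalizing s t
  · have := this ht hs (le_of_not_ge hts)
    rwa [mul_comm t, ← neg_sub s t, neg_sq, ← neg_sub (s ^ γ), neg_sq] at this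
  have hsq : ((s * t) ^ ((γ - 1) / 2)) ^ 2 = (s * t) ^ (γ - 1) := by
    rw [← rpow_natCast, ← rpow_mul (by positivity)]
    norm_num
  calc γ ^ 2 * (s * t) ^ (γ - 1) * (s - t) ^ 2
      = (γ * (s * t) ^ ((γ - 1) / 2) * (s - t)) ^ 2 := by rw [← hsq]; ring
    _ ≤ (s ^ γ - t ^ γ) ^ 2 :=
        pow_le_pow_left₀ (by have := sub_nonneg.2 hts; positivity)
          (mul_rpow_mul_sub_le_rpow_sub_rpow hγ ht hts) 2

theorem one_sub_rpow_le {α ε t : ℝ} (hα : 0 ≤ α) (hε : 0 < ε) (hε1 : ε ≤ 1) (ht : 0 < t)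
    (ht1 : t ≤ 1) : 1 - t ^ α ≤ α / ε * (1 - t) * t ^ (-ε) := by
  have hexp : 1 - t ^ α ≤ α * -log t := by
    rw [rpow_def_of_pos ht]
    linarith [add_one_le_exp (log t * α)]
  have hlog : ε * -log t ≤ t ^ (-ε) - 1 := by
    rw [mul_neg, ← neg_mul, ← log_rpow ht]
    exact log_le_sub_one_of_pos (by positivity)
  have hpow : t * t ^ (-ε) ≤ 1 :=
    calc t * t ^ (-ε) = t ^ (1 + -ε) := by rw [rpow_add ht, rpow_one]
      _ ≤ 1 := rpow_le_one ht.le ht1 (by linarith)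
  calc 1 - t ^ α ≤ α * -log t := hexp
    _ ≤ α * ((t ^ (-ε) - 1) / ε) := by
        gcongr
        rw [le_div_iff₀ hε]
        linarith
    _ ≤ α * ((1 - t) * t ^ (-ε) / ε) := by
        gcongr
        rw [sub_mul, one_mul]
        linarith
    _ = α / ε * (1 - t) * t ^ (-ε) := by ring

theorem rpow_sub_rpow_le {α ε x y : ℝ} (hα : 0 ≤ α) (hε : 0 < ε) (hε1 : ε ≤ 1) (hy : 0 < y)
    (hyx : y ≤ x) : x ^ α - y ^ α ≤ α / ε * x ^ (α - 1 + ε) * y ^ (-ε) * (x - y) := by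
  have hx : 0 < x := hy.trans_le hyx
  obtain ⟨t, ht, ht1, rfl⟩ : ∃ t, 0 < t ∧ t ≤ 1 ∧ y = x * t :=
    ⟨y / x, by positivity, (div_le_one hx).2 hyx, by field_simp⟩
  have hxα : x ^ (α - 1 + ε) * x ^ (-ε) * x = x ^ α := by
    rw [← rpow_add hx, ← rpow_add_one hx.ne']
    ring_nf
  calc x ^ α - (x * t) ^ α = x ^ α * (1 - t ^ α) := by rw [mul_rpow hx.le ht.le]; ring
    _ ≤ x ^ α * (α / ε * (1 - t) * t ^ (-ε)) := by
        gcongr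
        exact one_sub_rpow_le hα hε hε1 ht ht1
    _ = α / ε * x ^ (α - 1 + ε) * (x * t) ^ (-ε) * (x - x * t) := by
        rw [mul_rpow hx.le ht.le, ← hxα]
        ring

theorem abs_one_sub_rpow_le_one {α x : ℝ} (hα : 0 ≤ α) (hx : 0 ≤ x) (hx1 : x ≤ 1) :
    |1 - x ^ α| ≤ 1 := by
  have := rpow_le_one hx hx1 hα
  rw [abs_le]
  constructor <;> linarith [rpow_nonneg hx α]

theorem lintegral_Ioc_rpow {β c : ℝ} (hβ : -1 < β) (hc : 0 ≤ c) :
    ∫⁻ x in Ioc 0 c, ENNReal.ofReal (x ^ β) = ENNReal.ofReal (c ^ (β + 1) / (β + 1)) := by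
  have hint : IntegrableOn (fun x : ℝ => x ^ β) (Ioc 0 c) :=
    (intervalIntegrable_iff_integrableOn_Ioc_of_le hc).1
      (intervalIntegral.intervalIntegrable_rpow' hβ)
  rw [← ofReal_integral_eq_lintegral_ofReal hint
      ((ae_restrict_iff' measurableSet_Ioc).2 (.of_forall fun x hx => rpow_nonneg hx.1.le β)),
    ← intervalIntegral.integral_of_le hc, integral_rpow (.inl hβ), zero_rpow (by linarith),
    sub_zero]

theorem lintegral_Ioo_comp_rpow {γ : ℝ} (hγ : 0 < γ) (g : ℝ → ℝ≥0∞) :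
    ∫⁻ s in Ioo 0 1, ENNReal.ofReal (γ * s ^ (γ - 1)) * g (s ^ γ) = ∫⁻ x in Ioo 0 1, g x := by
  have himage : (· ^ γ) '' Ioo (0 : ℝ) 1 = Ioo 0 1 := by
    refine Subset.antisymm (image_subset_iff.2 fun s hs =>
      ⟨rpow_pos_of_pos hs.1 γ, rpow_lt_one hs.1.le hs.2 hγ⟩) fun x hx =>
        ⟨x ^ γ⁻¹, ⟨rpow_pos_of_pos hx.1 _, rpow_lt_one hx.1.le hx.2 (by positivity)⟩,
          rpow_inv_rpow hx.1.le hγ.ne'⟩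
  conv_rhs => rw [← himage]
  rw [lintegral_image_eq_lintegral_deriv_mul_of_monotoneOn measurableSet_Ioo
    (fun s hs => (hasDerivAt_rpow_const (.inl hs.1.ne')).hasDerivWithinAt)
    ((strictMonoOn_rpow_Ici_of_exponent_pos hγ).monotoneOn.mono
      (Ioo_subset_Ioi_self.trans Ioi_subset_Ici_self))]

theorem lintegral_lintegral_le_two_mul_lintegral_Iic {X : Type*} [LinearOrder X]
    [MeasurableSpace X] [TopologicalSpace X] [OrderClosedTopology X] [OpensMeasurableSpace X]
    [SecondCountableTopology X] {μ : Measure X} [SFinite μ] {f : X → X → ℝ≥0∞}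
    (hf : Measurable (Function.uncurry f)) (hsymm : ∀ x y, f x y = f y x) :
    ∫⁻ x, ∫⁻ y, f x y ∂μ ∂μ ≤ 2 * ∫⁻ x, ∫⁻ y in Iic x, f x y ∂μ ∂μ := by
  set g : X → X → ℝ≥0∞ := fun x => (Iic x).indicator (f x)
  have hg : Measurable (Function.uncurry g) :=
    hf.indicator (measurableSet_le measurable_snd measurable_fst)
  have hfg : ∀ x y, f x y ≤ g x y + g y x := fun x y => by
    rcases le_total y x with h | h
    · simp [g, indicator_of_mem (mem_Iic.2 h)]
    · simp [g, indicator_of_mem (mem_Iic.2 h), hsymm x y]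
  calc ∫⁻ x, ∫⁻ y, f x y ∂μ ∂μ
      ≤ ∫⁻ x, ∫⁻ y, (g x y + g y x) ∂μ ∂μ :=
        lintegral_mono fun x => lintegral_mono fun y => hfg x y
    _ = ∫⁻ x, ∫⁻ y, g x y ∂μ ∂μ + ∫⁻ x, ∫⁻ y, g y x ∂μ ∂μ := by
        have hg_inner : Measurable fun x => ∫⁻ y, g x y ∂μ := hg.lintegral_prod_right'
        rw [← lintegral_add_left hg_inner]
        exact lintegral_congr fun x => lintegral_add_left hg.of_uncurry_left _
    _ = 2 * ∫⁻ x, ∫⁻ y in Iic x, f x y ∂μ ∂μ := by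
        rw [lintegral_lintegral_swap (f := fun x y => g y x)
          (hg.comp measurable_swap).aemeasurable, ← two_mul]
        simp_rw [g, lintegral_indicator measurableSet_Iic]

def gagliardoKernel (α x y : ℝ) : ℝ := (x ^ α - y ^ α) ^ 2 / (x - y) ^ 2

theorem gagliardoKernel_nonneg (α x y : ℝ) : 0 ≤ gagliardoKernel α x y := by
  unfold gagliardoKernel; positivity

theorem gagliardoKernel_comm (α x y : ℝ) : gagliardoKernel α x y = gagliardoKernel α y x := by
  unfold gagliardoKernel; ring

@[fun_prop]
theorem measurable_gagliardoKernel (α : ℝ) :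
    Measurable fun p : ℝ × ℝ => gagliardoKernel α p.1 p.2 := by
  unfold gagliardoKernel; fun_prop

theorem gagliardoKernel_le {α ε x y : ℝ} (hα : 0 ≤ α) (hε : 0 < ε) (hε1 : ε ≤ 1) (hy : 0 < y)
    (hyx : y ≤ x) : gagliardoKernel α x y ≤ (α / ε * x ^ (α - 1 + ε) * y ^ (-ε)) ^ 2 := by
  rcases hyx.eq_or_lt with rfl | hlt
  · rw [show gagliardoKernel α y y = 0 by simp [gagliardoKernel]]
    positivity
  have hxy : 0 < x - y := sub_pos.2 hlt
  rw [gagliardoKernel, ← div_pow]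
  refine pow_le_pow_left₀ (div_nonneg ?_ hxy.le) ?_ 2
  · exact sub_nonneg.2 (rpow_le_rpow hy.le hlt.le hα)
  · rw [div_le_iff₀ hxy]
    exact rpow_sub_rpow_le hα hε hε1 hy hyx

theorem lintegral_Ioc_gagliardoKernel_le {α x : ℝ} (hα : 0 ≤ α) (hx : 0 < x) :
    ∫⁻ y in Ioc 0 x, ENNReal.ofReal (gagliardoKernel α x y)
      ≤ ENNReal.ofReal (32 * α ^ 2 * x ^ (2 * α - 1)) := by
  have hsq : ∀ y, 0 < y → (α / (1 / 4) * x ^ (α - 1 + 1 / 4) * y ^ (-(1 / 4) : ℝ)) ^ 2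
      = 16 * α ^ 2 * x ^ (2 * α - 3 / 2) * y ^ (-(1 / 2) : ℝ) := fun y hy => by
    rw [mul_pow, mul_pow, ← rpow_mul_natCast hx.le, ← rpow_mul_natCast hy.le]
    ring_nf
  calc ∫⁻ y in Ioc 0 x, ENNReal.ofReal (gagliardoKernel α x y)
      ≤ ∫⁻ y in Ioc 0 x, ENNReal.ofReal (16 * α ^ 2 * x ^ (2 * α - 3 / 2)) *
          ENNReal.ofReal (y ^ (-(1 / 2) : ℝ)) := by
        refine setLIntegral_mono (by fun_prop) fun y hy => ?_
        rw [← ENNReal.ofReal_mul (by positivity), ← hsq y hy.1]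
        exact ENNReal.ofReal_le_ofReal
          (gagliardoKernel_le hα (by norm_num) (by norm_num) hy.1 hy.2)
    _ = ENNReal.ofReal (32 * α ^ 2 * x ^ (2 * α - 1)) := by
        rw [lintegral_const_mul _ (by fun_prop), lintegral_Ioc_rpow (by norm_num) hx.le,
          ← ENNReal.ofReal_mul (by positivity)]
        congr 1
        have hexp : x ^ (2 * α - 3 / 2) * x ^ (-(1 / 2) + 1 : ℝ) = x ^ (2 * α - 1) := by
          rw [← rpow_add hx]
          ring_nf
        linear_combination 32 * α ^ 2 * hexp

theorem mul_rpow_mul_gagliardoKernel_rpow_le {a γ s t : ℝ} (hγ : 1 ≤ γ) (hs : 0 < s)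
    (ht : 0 < t) :
    γ * s ^ (γ - 1) * (γ * t ^ (γ - 1) * gagliardoKernel a (s ^ γ) (t ^ γ))
      ≤ gagliardoKernel (γ * a) s t := by
  rcases eq_or_ne s t with rfl | hst
  · simp [gagliardoKernel]
  have hγ0 : 0 < γ := zero_lt_one.trans_le hγ
  have hD : 0 < (s ^ γ - t ^ γ) ^ 2 :=
    pow_two_pos_of_ne_zero (sub_ne_zero.2 fun h => hst (rpow_left_injOn hγ0.ne' hs.le ht.le h))
  have hd : 0 < (s - t) ^ 2 := pow_two_pos_of_ne_zero (sub_ne_zero.2 hst)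
  set N := (s ^ (γ * a) - t ^ (γ * a)) ^ 2
  have hN : 0 ≤ N := sq_nonneg _
  rw [gagliardoKernel, gagliardoKernel, ← rpow_mul hs.le, ← rpow_mul ht.le,
    show γ * s ^ (γ - 1) * (γ * t ^ (γ - 1) * (N / (s ^ γ - t ^ γ) ^ 2))
      = γ ^ 2 * (s * t) ^ (γ - 1) * N / (s ^ γ - t ^ γ) ^ 2 by rw [mul_rpow hs.le ht.le]; ring,
    div_le_div_iff₀ hD hd]
  calc γ ^ 2 * (s * t) ^ (γ - 1) * N * (s - t) ^ 2
      = N * (γ ^ 2 * (s * t) ^ (γ - 1) * (s - t) ^ 2) := by ring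
    _ ≤ N * (s ^ γ - t ^ γ) ^ 2 :=
        mul_le_mul_of_nonneg_left (sq_mul_rpow_mul_sub_sq_le hγ hs ht) hN

def Qlintegral (α : ℝ) : ℝ≥0∞ :=
  ∫⁻ x in Ioo 0 1, ∫⁻ y in Ioo 0 1, ENNReal.ofReal (gagliardoKernel α x y)

theorem Qlintegral_le {α : ℝ} (hα : 0 < α) : Qlintegral α ≤ ENNReal.ofReal (32 * α) := by
  have hinner : ∀ x ∈ Ioo (0 : ℝ) 1,
      ∫⁻ y in Iic x, ENNReal.ofReal (gagliardoKernel α x y) ∂volume.restrict (Ioo 0 1)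
        ≤ ENNReal.ofReal (32 * α ^ 2) * ENNReal.ofReal (x ^ (2 * α - 1)) := fun x hx => by
    rw [Measure.restrict_restrict measurableSet_Iic, ← ENNReal.ofReal_mul (by positivity)]
    refine (lintegral_mono_set (show Iic x ∩ Ioo 0 1 ⊆ Ioc 0 x from
      fun y hy => ⟨hy.2.1, hy.1⟩)).trans ?_
    exact lintegral_Ioc_gagliardoKernel_le hα.le hx.1
  calc Qlintegral α
      ≤ 2 * ∫⁻ x in Ioo 0 1, ∫⁻ y in Iic x,
          ENNReal.ofReal (gagliardoKernel α x y) ∂volume.restrict (Ioo 0 1) :=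
        lintegral_lintegral_le_two_mul_lintegral_Iic
          (measurable_gagliardoKernel α).ennreal_ofReal fun x y => by rw [gagliardoKernel_comm]
    _ ≤ 2 * ∫⁻ x in Ioc 0 1,
          ENNReal.ofReal (32 * α ^ 2) * ENNReal.ofReal (x ^ (2 * α - 1)) := by
        gcongr 2 * ?_
        exact (setLIntegral_mono (by fun_prop) hinner).trans
          (lintegral_mono_set Ioo_subset_Ioc_self)
    _ = ENNReal.ofReal (32 * α) := by
        rw [lintegral_const_mul _ (by fun_prop), lintegral_Ioc_rpow (by linarith) zero_le_one,
          ← ENNReal.ofReal_mul (by positivity), ← ENNReal.ofReal_ofNat 2,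
          ← ENNReal.ofReal_mul zero_le_two]
        congr 1
        field_simp
        norm_num

theorem Qlintegral_mono {a b : ℝ} (ha : 0 < a) (hab : a ≤ b) : Qlintegral a ≤ Qlintegral b := by
  set γ := b / a
  have hγ : 1 ≤ γ := (one_le_div ha).2 hab
  have hγ0 : 0 < γ := zero_lt_one.trans_le hγ
  have hγa : γ * a = b := div_mul_cancel₀ b ha.ne'
  calc Qlintegral a
      = ∫⁻ s in Ioo 0 1, ENNReal.ofReal (γ * s ^ (γ - 1)) * ∫⁻ t in Ioo 0 1,
          ENNReal.ofReal (γ * t ^ (γ - 1)) *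
            ENNReal.ofReal (gagliardoKernel a (s ^ γ) (t ^ γ)) := by
        rw [Qlintegral, ← lintegral_Ioo_comp_rpow hγ0]
        refine lintegral_congr fun s => ?_
        rw [← lintegral_Ioo_comp_rpow hγ0]
    _ ≤ Qlintegral b := by
        refine setLIntegral_mono
          (measurable_gagliardoKernel b).ennreal_ofReal.lintegral_prod_right' fun s hs => ?_
        rw [← lintegral_const_mul' _ _ ENNReal.ofReal_ne_top]
        refine setLIntegral_mono (by fun_prop) fun t ht => ?_
        rw [← ENNReal.ofReal_mul (mul_nonneg hγ0.le (rpow_nonneg ht.1.le _)),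
          ← ENNReal.ofReal_mul (mul_nonneg hγ0.le (rpow_nonneg hs.1.le _)), ← hγa]
        exact ENNReal.ofReal_le_ofReal (mul_rpow_mul_gagliardoKernel_rpow_le hγ hs.1 ht.1)

theorem setLIntegral_gagliardoKernel (α : ℝ) :
    ∫⁻ p in Ioo 0 1 ×ˢ Ioo 0 1, ENNReal.ofReal (gagliardoKernel α p.1 p.2) = Qlintegral α :=
  setLIntegral_prod _ (measurable_gagliardoKernel α).ennreal_ofReal.aemeasurable

theorem integrableOn_gagliardoKernel {α : ℝ} (hα : 0 < α) :
    IntegrableOn (fun p : ℝ × ℝ => gagliardoKernel α p.1 p.2) (Ioo 0 1 ×ˢ Ioo 0 1) := by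
  have hfin : ∫⁻ p in Ioo 0 1 ×ˢ Ioo 0 1, ENNReal.ofReal (gagliardoKernel α p.1 p.2) < ⊤ := by
    rw [setLIntegral_gagliardoKernel]
    exact (Qlintegral_le hα).trans_lt ENNReal.ofReal_lt_top
  have hnn : 0 ≤ᵐ[volume.restrict (Ioo 0 1 ×ˢ Ioo 0 1)]
      fun p : ℝ × ℝ => gagliardoKernel α p.1 p.2 :=
    .of_forall fun p => gagliardoKernel_nonneg α p.1 p.2
  exact ⟨(measurable_gagliardoKernel α).aestronglyMeasurable,
    (hasFiniteIntegral_iff_ofReal hnn).2 hfin⟩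

theorem Q_eq_toReal_Qlintegral {α : ℝ} (hα : 0 < α) : Q α = (Qlintegral α).toReal := by
  calc Q α = ∫ p in Ioo 0 1 ×ˢ Ioo 0 1, gagliardoKernel α p.1 p.2 :=
        (setIntegral_prod _ (integrableOn_gagliardoKernel hα)).symm
    _ = (∫⁻ p in Ioo 0 1 ×ˢ Ioo 0 1, ENNReal.ofReal (gagliardoKernel α p.1 p.2)).toReal :=
        integral_eq_lintegral_of_nonneg_ae (.of_forall fun p => gagliardoKernel_nonneg α p.1 p.2)
          (measurable_gagliardoKernel α).aestronglyMeasurable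
    _ = (Qlintegral α).toReal := by rw [setLIntegral_gagliardoKernel]

theorem Q_nonneg (α : ℝ) : 0 ≤ Q α :=
  integral_nonneg fun _ => integral_nonneg fun _ => gagliardoKernel_nonneg _ _ _

theorem Q_le {α : ℝ} (hα : 0 < α) : Q α ≤ 32 * α := by
  rw [Q_eq_toReal_Qlintegral hα]
  exact ENNReal.toReal_le_of_le_ofReal (by positivity) (Qlintegral_le hα)

theorem Q_monotoneOn : MonotoneOn Q (Ioi 0) := fun a ha b hb hab => by
  rw [Q_eq_toReal_Qlintegral ha, Q_eq_toReal_Qlintegral hb]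
  exact ENNReal.toReal_mono ((Qlintegral_le hb).trans_lt ENNReal.ofReal_lt_top).ne
    (Qlintegral_mono ha hab)

theorem Q_tendsto_zero : Tendsto Q (𝓝[>] 0) (𝓝 0) := by
  refine squeeze_zero' (.of_forall Q_nonneg)
    (eventually_nhdsWithin_of_forall fun α hα => Q_le hα) ?_
  exact tendsto_nhdsWithin_of_tendsto_nhds
    ((continuous_const_mul 32).tendsto' 0 0 (mul_zero 32))

theorem memLp_one_sub_rpow {α : ℝ} (hα : 0 ≤ α) :
    MemLp (fun x : ℝ => 1 - x ^ α) 2 (volume.restrict (Ioo 0 1)) :=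
  .of_bound (by fun_prop) 1 <| (ae_restrict_iff' measurableSet_Ioo).2 <|
    .of_forall fun x hx => abs_one_sub_rpow_le_one hα hx.1.le hx.2.le

theorem L2sq_tendsto_zero : Tendsto L2sq (𝓝[>] 0) (𝓝 0) := by
  unfold L2sq
  have hbound : ∀ᶠ α in 𝓝[>] (0 : ℝ),
      ∀ᵐ x ∂volume.restrict (Ioo (0 : ℝ) 1), ‖(1 - x ^ α) ^ 2‖ ≤ 1 :=
    eventually_nhdsWithin_of_forall fun α hα => (ae_restrict_iff' measurableSet_Ioo).2 <|
      .of_forall fun x hx => by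
        rw [norm_pow, norm_eq_abs]
        exact pow_le_one₀ (abs_nonneg _) (abs_one_sub_rpow_le_one hα.out.le hx.1.le hx.2.le)
  have hlim : ∀ᵐ x ∂volume.restrict (Ioo (0 : ℝ) 1),
      Tendsto (fun α : ℝ => (1 - x ^ α) ^ 2) (𝓝[>] 0) (𝓝 0) :=
    (ae_restrict_iff' measurableSet_Ioo).2 <| .of_forall fun x hx => by
      simpa using tendsto_nhdsWithin_of_tendsto_nhds
        (((continuousAt_const_rpow (b := 0) hx.1.ne').tendsto.const_sub 1).pow 2)
  simpa using tendsto_integral_filter_of_dominated_convergence (fun _ => 1)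
    (.of_forall fun α => by fun_prop) hbound (integrable_const 1) hlim

/-- For α ∈ (0,1], f_α(x) = 1 - x^α lies in H^{1/2}(0,1) (i.e. it is in
L²(0,1) and the Gagliardo seminorm integrand is integrable on (0,1)²); Q is
nondecreasing on (0,1] and tends to 0 as α → 0⁺; ‖f_α‖_{L²} → 0 as α → 0⁺; hence
‖f_α‖_{H^{1/2}(0,1)} → 0 as α → 0⁺. -/
theorem halfnorm_tendsto_zero :
    (∀ α ∈ Ioc (0:ℝ) 1,
      MemLp (fun x : ℝ => 1 - x ^ α) 2 (volume.restrict (Ioo (0:ℝ) 1)) ∧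
      IntegrableOn (fun p : ℝ × ℝ => (p.1 ^ α - p.2 ^ α) ^ 2 / (p.1 - p.2) ^ 2)
        (Ioo (0:ℝ) 1 ×ˢ Ioo (0:ℝ) 1) volume) ∧
    MonotoneOn Q (Ioc (0:ℝ) 1) ∧
    Tendsto Q (nhdsWithin 0 (Ioi 0)) (nhds 0) ∧
    Tendsto L2sq (nhdsWithin 0 (Ioi 0)) (nhds 0) ∧
    Tendsto Hhalf (nhdsWithin 0 (Ioi 0)) (nhds 0) := by
  refine ⟨fun α hα => ⟨memLp_one_sub_rpow hα.1.le, integrableOn_gagliardoKernel hα.1⟩,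
    Q_monotoneOn.mono Ioc_subset_Ioi_self, Q_tendsto_zero, L2sq_tendsto_zero, ?_⟩
  have := (L2sq_tendsto_zero.add Q_tendsto_zero).sqrt
  rwa [add_zero, sqrt_zero] at this

end
end

section
/- For α∈(0,1], the reflected functions f̄_α(x)=1−|x|^α lie in H^{1/2}(−1,1), and ‖f̄_α‖_{H^{1/2}(−1,1)}→0 as α→0⁺; in particular the Gagliardo seminorm ∫_{−1}^{1}∫_{−1}^{1} (f̄_α(x)−f̄_α(y))²/(x−y)² dx dy tends to 0 as α→0⁺. -/
open MeasureTheory Set Filter Topology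
open scoped ENNReal NNReal

noncomputable section

/-- The reflected function f̄_α(x) = 1 - |x|^α on (-1,1). -/
def fbar (α : ℝ) (x : ℝ) : ℝ := 1 - |x| ^ α

/-- Gagliardo H^{1/2}(-1,1) seminorm squared of f̄_α. -/
def Qbar (α : ℝ) : ℝ :=
  ∫ x in Ioo (-1:ℝ) 1, ∫ y in Ioo (-1:ℝ) 1, (fbar α x - fbar α y) ^ 2 / (x - y) ^ 2

/-- Squared L²(-1,1) norm of f̄_α. -/
def L2sqBar (α : ℝ) : ℝ := ∫ x in Ioo (-1:ℝ) 1, (fbar α x) ^ 2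

/-- H^{1/2}(-1,1) norm of f̄_α. -/
def HhalfBar (α : ℝ) : ℝ := Real.sqrt (L2sqBar α + Qbar α)

/-!
For `0 < b ≤ a` the inequalities `a^α - b^α ≤ α a^α log (a/b)` and
`θ a^(1-θ) b^θ log (a/b) ≤ a - b` give, with `a = |x|`, `b = |y|` and `θ = 1/4`,
`(f̄_α x - f̄_α y)² / (x - y)² ≤ 16 α² |x|^(2α - 3/2) |y|^(-1/2)` on `|y| ≤ |x|`.
Integrating this majorant in `y` over `|y| ≤ |x|` leaves `64 α² |x|^(2α - 1)`, whose integral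
over `(-1, 1)` is `64 α`; by symmetry in `x, y` the seminorm squared is at most `128 α`.
At `a = 1` the same bound gives `‖f̄_α‖²_{L²} ≤ 64 α²`.
-/

open Real
open Function (uncurry)

lemma mul_rpow_mul_log_div_le_sub {a b θ : ℝ} (hb : 0 < b) (hba : b ≤ a) (hθ : θ ≤ 1) :
    θ * a ^ (1 - θ) * b ^ θ * log (a / b) ≤ a - b := by
  have ha : 0 < a := hb.trans_le hba
  have hlog := log_le_sub_one_of_pos (rpow_pos_of_pos (div_pos ha hb) θ)
  rw [log_rpow (div_pos ha hb), div_rpow ha.le hb.le] at hlog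
  have hsplit_a : a ^ (1 - θ) * a ^ θ = a := by rw [← rpow_add ha]; simp
  have hsplit_b : b ^ (1 - θ) * b ^ θ = b := by rw [← rpow_add hb]; simp
  have hmono : b ^ (1 - θ) ≤ a ^ (1 - θ) := rpow_le_rpow hb.le hba (by linarith)
  have hbθ : 0 < b ^ θ := rpow_pos_of_pos hb θ
  calc θ * a ^ (1 - θ) * b ^ θ * log (a / b)
        = a ^ (1 - θ) * b ^ θ * (θ * log (a / b)) := by ring
    _ ≤ a ^ (1 - θ) * b ^ θ * (a ^ θ / b ^ θ - 1) := by gcongr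
    _ = a - a ^ (1 - θ) * b ^ θ := by field_simp; linear_combination hsplit_a
    _ ≤ a - b := by nlinarith

lemma rpow_sub_rpow_le_mul_log_div {a b : ℝ} (ha : 0 < a) (hb : 0 < b) (α : ℝ) :
    a ^ α - b ^ α ≤ α * a ^ α * log (a / b) := by
  have h := one_sub_inv_le_log_of_pos (rpow_pos_of_pos (div_pos ha hb) α)
  rw [log_rpow (div_pos ha hb), div_rpow ha.le hb.le, inv_div] at h
  have haα : 0 < a ^ α := rpow_pos_of_pos ha α
  field_simp at h
  linarith

lemma rpow_sub_rpow_le_div_mul_sub {a b α θ : ℝ} (hb : 0 < b) (hba : b ≤ a) (hα : 0 ≤ α)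
    (hθ₀ : 0 < θ) (hθ₁ : θ ≤ 1) :
    a ^ α - b ^ α ≤ α / θ * (a - b) * a ^ (α + θ - 1) * b ^ (-θ) := by
  have ha : 0 < a := hb.trans_le hba
  have hcancel : a ^ (α + θ - 1) * b ^ (-θ) * (a ^ (1 - θ) * b ^ θ) = a ^ α := by
    rw [mul_mul_mul_comm, ← rpow_add ha, ← rpow_add hb, neg_add_cancel, rpow_zero, mul_one]
    ring_nf
  calc a ^ α - b ^ α ≤ α * a ^ α * log (a / b) := rpow_sub_rpow_le_mul_log_div ha hb α
    _ = α / θ * (θ * a ^ (1 - θ) * b ^ θ * log (a / b)) * (a ^ (α + θ - 1) * b ^ (-θ)) := by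
      rw [← hcancel]; field_simp
    _ ≤ α / θ * (a - b) * (a ^ (α + θ - 1) * b ^ (-θ)) := by
      gcongr; exact mul_rpow_mul_log_div_le_sub hb hba hθ₁
    _ = α / θ * (a - b) * a ^ (α + θ - 1) * b ^ (-θ) := by ring

lemma locallyIntegrable_abs_rpow {r : ℝ} (hr : -1 < r) :
    LocallyIntegrable (fun x : ℝ => |x| ^ r) := by
  refine locallyIntegrable_of_norm_le_rpow (C := 1) (α := -r) (by simp) (by simp; linarith)
    (ae_of_all _ fun x => ?_)
    (continuous_abs.measurable.pow_const r).aestronglyMeasurable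
  rw [neg_neg, one_mul, norm_of_nonneg (rpow_nonneg (abs_nonneg x) r), norm_eq_abs]

lemma integrableOn_abs_rpow {r : ℝ} (hr : -1 < r) (c : ℝ) :
    IntegrableOn (fun x : ℝ => |x| ^ r) (Ioo (-c) c) :=
  ((locallyIntegrable_abs_rpow hr).integrableOn_isCompact isCompact_Icc).mono_set
    Ioo_subset_Icc_self

lemma integral_Ioo_abs_rpow {r c : ℝ} (hr : -1 < r) (hc : 0 ≤ c) :
    ∫ x in Ioo (-c) c, |x| ^ r = 2 * c ^ (r + 1) / (r + 1) := by
  have hsym : (Ioo (-c) c).indicator (fun x : ℝ => |x| ^ r)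
      = fun x => (Iio c).indicator (fun t : ℝ => t ^ r) |x| := by
    ext x
    simp only [indicator, mem_Ioo, mem_Iio, ← abs_lt]
  rw [← integral_indicator measurableSet_Ioo, hsym, integral_comp_abs,
    integral_indicator measurableSet_Iio, Measure.restrict_restrict measurableSet_Iio,
    Iio_inter_Ioi, ← integral_Ioc_eq_integral_Ioo, ← intervalIntegral.integral_of_le hc,
    integral_rpow (Or.inl hr), zero_rpow (by linarith)]
  ring

lemma fbar_sub_sq_div_sq_le {α x y : ℝ} (hα : 0 ≤ α) (hy : y ≠ 0) (hyx : |y| ≤ |x|) :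
    (fbar α x - fbar α y) ^ 2 / (x - y) ^ 2
      ≤ 16 * α ^ 2 * |x| ^ (2 * α - 3 / 2) * |y| ^ (-(1 / 2) : ℝ) := by
  have hy₀ : 0 < |y| := abs_pos.2 hy
  have hx₀ : 0 < |x| := hy₀.trans_le hyx
  have hkey := rpow_sub_rpow_le_div_mul_sub hy₀ hyx hα (θ := 1 / 4) (by norm_num) (by norm_num)
  have hdiff : 0 ≤ |x| ^ α - |y| ^ α := sub_nonneg.2 (rpow_le_rpow hy₀.le hyx hα)
  have habs : (|x| - |y|) ^ 2 ≤ (x - y) ^ 2 :=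
    sq_le_sq.2 (by simpa using abs_abs_sub_abs_le_abs_sub x y)
  apply div_le_of_le_mul₀ (sq_nonneg _) (by positivity)
  calc (fbar α x - fbar α y) ^ 2 = (|x| ^ α - |y| ^ α) ^ 2 := by unfold fbar; ring
    _ ≤ (α / (1 / 4) * (|x| - |y|) * |x| ^ (α + 1 / 4 - 1) * |y| ^ (-(1 / 4) : ℝ)) ^ 2 :=
      pow_le_pow_left₀ hdiff hkey 2
    _ = 16 * α ^ 2 * |x| ^ (2 * α - 3 / 2) * |y| ^ (-(1 / 2) : ℝ) * (|x| - |y|) ^ 2 := by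
      rw [mul_pow, mul_pow, mul_pow, ← rpow_mul_natCast hx₀.le, ← rpow_mul_natCast hy₀.le]
      ring_nf
    _ ≤ 16 * α ^ 2 * |x| ^ (2 * α - 3 / 2) * |y| ^ (-(1 / 2) : ℝ) * (x - y) ^ 2 := by gcongr

local notation "μI" => volume.restrict (Ioo (-1 : ℝ) 1)

def gagliardoMajorant (α x y : ℝ) : ℝ :=
  if |y| ≤ |x| then 16 * α ^ 2 * |x| ^ (2 * α - 3 / 2) * |y| ^ (-(1 / 2) : ℝ) else 0

lemma gagliardoMajorant_of_abs_le {α x y : ℝ} (h : |y| ≤ |x|) :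
    gagliardoMajorant α x y = 16 * α ^ 2 * |x| ^ (2 * α - 3 / 2) * |y| ^ (-(1 / 2) : ℝ) :=
  if_pos h

lemma gagliardoMajorant_nonneg (α x y : ℝ) : 0 ≤ gagliardoMajorant α x y := by
  unfold gagliardoMajorant; split_ifs <;> positivity

lemma measurable_gagliardoMajorant (α : ℝ) : Measurable (uncurry (gagliardoMajorant α)) :=
  Measurable.ite (measurableSet_le (by fun_prop) (by fun_prop)) (by fun_prop) measurable_const

lemma gagliardoMajorant_eq_indicator (α x : ℝ) :
    gagliardoMajorant α x = (Icc (-|x|) |x|).indicator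
      fun y => 16 * α ^ 2 * |x| ^ (2 * α - 3 / 2) * |y| ^ (-(1 / 2) : ℝ) := by
  ext y
  simp only [gagliardoMajorant, indicator, mem_Icc, ← abs_le]

lemma integral_gagliardoMajorant {α x : ℝ} (hx₀ : x ≠ 0) (hx : x ∈ Ioo (-1 : ℝ) 1) :
    ∫ y, gagliardoMajorant α x y ∂μI = 64 * α ^ 2 * |x| ^ (2 * α - 1) := by
  have hx₁ : |x| < 1 := abs_lt.2 hx
  have hsub : Icc (-|x|) |x| ⊆ Ioo (-1) 1 := Icc_subset_Ioo (by linarith) hx₁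
  rw [gagliardoMajorant_eq_indicator, integral_indicator measurableSet_Icc,
    Measure.restrict_restrict measurableSet_Icc, inter_eq_left.2 hsub,
    integral_Icc_eq_integral_Ioo, integral_const_mul,
    integral_Ioo_abs_rpow (by norm_num) (abs_nonneg x)]
  have hsplit : |x| ^ (2 * α - 3 / 2) * |x| ^ (-(1 / 2) + 1 : ℝ) = |x| ^ (2 * α - 1) := by
    rw [← rpow_add (abs_pos.2 hx₀)]; ring_nf
  linear_combination (64 * α ^ 2) * hsplit

lemma integrable_gagliardoMajorant {α : ℝ} (hα : 0 < α) :
    Integrable (uncurry (gagliardoMajorant α)) (Measure.prod μI μI) := by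
  rw [integrable_prod_iff (measurable_gagliardoMajorant α).aestronglyMeasurable]
  constructor
  · refine ae_of_all _ fun x => ?_
    simp only [Function.uncurry_apply_pair, gagliardoMajorant_eq_indicator]
    exact ((integrableOn_abs_rpow (by norm_num) 1).const_mul _).indicator measurableSet_Icc
  · have hpow := integrableOn_abs_rpow (r := 2 * α - 1) (by linarith) 1
    refine (hpow.const_mul (64 * α ^ 2)).congr ?_
    filter_upwards [ae_restrict_mem measurableSet_Ioo, ae_restrict_of_ae (volume.ae_ne 0)]
      with x hx hx₀
    simp only [Function.uncurry_apply_pair, norm_of_nonneg (gagliardoMajorant_nonneg _ _ _)]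
    exact (integral_gagliardoMajorant hx₀ hx).symm

lemma integral_prod_gagliardoMajorant {α : ℝ} (hα : 0 < α) :
    ∫ p, uncurry (gagliardoMajorant α) p ∂(Measure.prod μI μI) = 64 * α := by
  rw [integral_prod _ (integrable_gagliardoMajorant hα)]
  simp only [Function.uncurry_apply_pair]
  have hslice : (fun x => ∫ y, gagliardoMajorant α x y ∂μI) =ᵐ[μI]
      fun x => 64 * α ^ 2 * |x| ^ (2 * α - 1) := by
    filter_upwards [ae_restrict_mem measurableSet_Ioo, ae_restrict_of_ae (volume.ae_ne 0)]
      with x hx hx₀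
    exact integral_gagliardoMajorant hx₀ hx
  rw [integral_congr_ae hslice, integral_const_mul, integral_Ioo_abs_rpow (by linarith) zero_le_one,
    one_rpow]
  field_simp
  ring

lemma fbar_sub_sq_div_sq_le_majorant {α x y : ℝ} (hα : 0 ≤ α) (hx : x ≠ 0) (hy : y ≠ 0) :
    (fbar α x - fbar α y) ^ 2 / (x - y) ^ 2
      ≤ gagliardoMajorant α x y + gagliardoMajorant α y x := by
  rcases le_total |y| |x| with h | h
  · rw [gagliardoMajorant_of_abs_le h]
    linarith [fbar_sub_sq_div_sq_le hα hy h, gagliardoMajorant_nonneg α y x]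
  · rw [gagliardoMajorant_of_abs_le h, ← neg_sub (fbar α y), ← neg_sub y, neg_sq, neg_sq]
    linarith [fbar_sub_sq_div_sq_le hα hx h, gagliardoMajorant_nonneg α x y]

lemma ae_fbar_integrand_le_majorant {α : ℝ} (hα : 0 ≤ α) :
    ∀ᵐ p ∂(Measure.prod μI μI), (fbar α p.1 - fbar α p.2) ^ 2 / (p.1 - p.2) ^ 2
      ≤ gagliardoMajorant α p.1 p.2 + gagliardoMajorant α p.2 p.1 := by
  have hne : ∀ᵐ x ∂μI, x ≠ 0 := ae_restrict_of_ae (volume.ae_ne 0)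
  filter_upwards [Measure.quasiMeasurePreserving_fst.ae hne,
    Measure.quasiMeasurePreserving_snd.ae hne] with p hp₁ hp₂
  exact fbar_sub_sq_div_sq_le_majorant hα hp₁ hp₂

lemma integrable_fbar_integrand {α : ℝ} (hα : 0 < α) :
    Integrable (fun p : ℝ × ℝ => (fbar α p.1 - fbar α p.2) ^ 2 / (p.1 - p.2) ^ 2)
      (Measure.prod μI μI) := by
  have hM := integrable_gagliardoMajorant hα
  refine (hM.add hM.swap).mono' (Measurable.aestronglyMeasurable (by unfold fbar; fun_prop)) ?_
  filter_upwards [ae_fbar_integrand_le_majorant hα.le] with p hp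
  rwa [norm_of_nonneg (by positivity)]

lemma Qbar_nonneg (α : ℝ) : 0 ≤ Qbar α :=
  integral_nonneg fun _ => integral_nonneg fun _ => by positivity

lemma Qbar_le {α : ℝ} (hα : 0 < α) : Qbar α ≤ 128 * α := by
  have hM := integrable_gagliardoMajorant hα
  calc Qbar α
        = ∫ p, (fbar α p.1 - fbar α p.2) ^ 2 / (p.1 - p.2) ^ 2 ∂(Measure.prod μI μI) :=
        (integral_prod _ (integrable_fbar_integrand hα)).symm
    _ ≤ ∫ p, uncurry (gagliardoMajorant α) p
          + (uncurry (gagliardoMajorant α) ∘ Prod.swap) p ∂(Measure.prod μI μI) :=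
        integral_mono_ae (integrable_fbar_integrand hα) (hM.add hM.swap)
          (ae_fbar_integrand_le_majorant hα.le)
    _ = 128 * α := by
        rw [integral_add hM hM.swap, Function.comp_def, integral_prod_swap,
          integral_prod_gagliardoMajorant hα]
        ring

lemma memLp_fbar {α : ℝ} (hα : 0 ≤ α) : MemLp (fbar α) 2 μI := by
  refine MemLp.of_bound (by unfold fbar; fun_prop) 1 ?_
  filter_upwards [ae_restrict_mem measurableSet_Ioo] with x hx
  have h₁ : |x| ^ α ≤ 1 := rpow_le_one (abs_nonneg x) (abs_lt.2 hx).le hα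
  have h₀ : 0 ≤ |x| ^ α := rpow_nonneg (abs_nonneg x) α
  rw [norm_eq_abs, abs_le, fbar]
  constructor <;> linarith

lemma fbar_sq_le {α x : ℝ} (hα : 0 ≤ α) (hx₀ : x ≠ 0) (hx₁ : |x| ≤ 1) :
    fbar α x ^ 2 ≤ 16 * α ^ 2 * |x| ^ (-(1 / 2) : ℝ) := by
  have hx : 0 < |x| := abs_pos.2 hx₀
  have hkey := rpow_sub_rpow_le_div_mul_sub hx hx₁ hα (θ := 1 / 4) (by norm_num) (by norm_num)
  rw [one_rpow, one_rpow] at hkey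
  have hnonneg : 0 ≤ fbar α x := sub_nonneg.2 (rpow_le_one hx.le hx₁ hα)
  have hle : fbar α x ≤ 4 * α * |x| ^ (-(1 / 4) : ℝ) := by
    have : 0 ≤ α * |x| * |x| ^ (-(1 / 4) : ℝ) := by positivity
    unfold fbar; linarith
  calc fbar α x ^ 2 ≤ (4 * α * |x| ^ (-(1 / 4) : ℝ)) ^ 2 := pow_le_pow_left₀ hnonneg hle 2
    _ = 16 * α ^ 2 * |x| ^ (-(1 / 2) : ℝ) := by rw [mul_pow, ← rpow_mul_natCast hx.le]; ring_nf

lemma L2sqBar_nonneg (α : ℝ) : 0 ≤ L2sqBar α :=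
  integral_nonneg fun _ => sq_nonneg _

lemma L2sqBar_le {α : ℝ} (hα : 0 ≤ α) : L2sqBar α ≤ 64 * α ^ 2 := by
  have hbound : ∀ᵐ x ∂μI, fbar α x ^ 2 ≤ 16 * α ^ 2 * |x| ^ (-(1 / 2) : ℝ) := by
    filter_upwards [ae_restrict_mem measurableSet_Ioo, ae_restrict_of_ae (volume.ae_ne 0)]
      with x hx hx₀
    exact fbar_sq_le hα hx₀ (abs_lt.2 hx).le
  calc L2sqBar α ≤ ∫ x, 16 * α ^ 2 * |x| ^ (-(1 / 2) : ℝ) ∂μI :=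
        integral_mono_ae (memLp_fbar hα).integrable_sq
          ((integrableOn_abs_rpow (by norm_num) 1).const_mul _) hbound
    _ = 64 * α ^ 2 := by
        rw [integral_const_mul, integral_Ioo_abs_rpow (by norm_num) zero_le_one, one_rpow]
        ring

lemma tendsto_nhdsGT_zero_of_nonneg_of_le_mul_pow {f : ℝ → ℝ} {C : ℝ} {n : ℕ}
    (hn : n ≠ 0)
    (hf₀ : ∀ α, 0 ≤ f α) (hf : ∀ α > 0, f α ≤ C * α ^ n) :
    Tendsto f (𝓝[>] 0) (𝓝 0) := by
  have hbound : Tendsto (fun α : ℝ => C * α ^ n) (𝓝[>] 0) (𝓝 0) :=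
    ((continuous_pow n).const_mul C |>.tendsto' 0 0 (by simp [hn])).mono_left nhdsWithin_le_nhds
  exact tendsto_of_tendsto_of_tendsto_of_le_of_le' tendsto_const_nhds hbound
    (Eventually.of_forall hf₀) (eventually_nhdsWithin_of_forall hf)

/-- For α ∈ (0,1], the reflected functions f̄_α(x) = 1 - |x|^α lie in
H^{1/2}(-1,1) (they are in L²(-1,1) and the Gagliardo seminorm integrand is integrable
on (-1,1)²), and ‖f̄_α‖_{H^{1/2}(-1,1)} → 0 as α → 0⁺; in particular the Gagliardo
seminorm tends to 0 as α → 0⁺. -/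
theorem reflected_halfnorm_tendsto_zero :
    (∀ α ∈ Ioc (0:ℝ) 1,
      MemLp (fbar α) 2 (volume.restrict (Ioo (-1:ℝ) 1)) ∧
      IntegrableOn (fun p : ℝ × ℝ => (fbar α p.1 - fbar α p.2) ^ 2 / (p.1 - p.2) ^ 2)
        (Ioo (-1:ℝ) 1 ×ˢ Ioo (-1:ℝ) 1) volume) ∧
    Tendsto HhalfBar (nhdsWithin 0 (Ioi 0)) (nhds 0) ∧
    Tendsto Qbar (nhdsWithin 0 (Ioi 0)) (nhds 0) := by
  have hQ : Tendsto Qbar (𝓝[>] 0) (𝓝 0) :=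
    tendsto_nhdsGT_zero_of_nonneg_of_le_mul_pow (C := 128) one_ne_zero Qbar_nonneg
      fun α hα => by simpa using Qbar_le hα
  have hL : Tendsto L2sqBar (𝓝[>] 0) (𝓝 0) :=
    tendsto_nhdsGT_zero_of_nonneg_of_le_mul_pow two_ne_zero L2sqBar_nonneg
      fun α hα => L2sqBar_le hα.le
  refine ⟨fun α hα => ⟨memLp_fbar hα.1.le, ?_⟩, ?_, hQ⟩
  · rw [IntegrableOn, Measure.volume_eq_prod, ← Measure.prod_restrict]
    exact integrable_fbar_integrand hα.1
  · have hsum : Tendsto (fun α => L2sqBar α + Qbar α) (𝓝[>] 0) (𝓝 0) := by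
      simpa using hL.add hQ
    exact (continuous_sqrt.tendsto' 0 0 sqrt_zero).comp hsum
end
end
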